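/- arXiv:2005.01083 — 4 statements merged into one kernel-verified Lean document; each statement's English description precedes it below -/
import Mathlib

section
/- Every incoherent operation acting on a single qutrit admits a Kraus decomposition with at most 32 incoherent Kraus operators. That is, if Φ is a completely positive trace-preserving map on M₃(ℂ) admitting a Kraus representation Φ(ρ) = ∑ₙ Kₙ ρ Kₙ† with ∑ₙ Kₙ† Kₙ = I in which every Kₙ is incoherent, then there exist incoherent 3×3 complex matrices L₁, …, L₃₂ with ∑ⱼ₌₁³² Lⱼ† Lⱼ = I such that Φ(ρ) = ∑ⱼ₌₁³² Lⱼ ρ Lⱼ† for all ρ ∈ M₃(ℂ). -/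
open Matrix

/-- A matrix is an incoherent Kraus operator if each column contains at most
one nonzero entry. -/
def IsIncoherentKraus {d : ℕ} (K : Matrix (Fin d) (Fin d) ℂ) : Prop :=
  ∀ j i₁ i₂, K i₁ j ≠ 0 → K i₂ j ≠ 0 → i₁ = i₂

/-!
An incoherent Kraus operator is determined by its pattern `g : Fin d → Fin d` (the row of the
nonzero entry of each column) and the vector `c` of its entries, and `ρ ↦ K ρ Kᴴ` depends only on
`g` and `c cᴴ`. A Givens rotation turns two vectors `u, c` with the same pattern `g` into two
vectors with the same `u uᴴ + c cᴴ`, the second vanishing at a chosen column `a`; that one may then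
be given the pattern `g` with `g a := 0`. Inserting the operators one at a time and pushing each
remainder down towards the zero pattern leaves one operator per pattern plus operators with the
zero pattern, and the latter collapse to `d` operators because a positive semidefinite `d × d`
matrix is a sum of `d` rank-one terms. This gives `d ^ d + d` operators, `30` for a qutrit.
-/

theorem Matrix.sum_hadamard {ι m n α : Type*} [NonUnitalNonAssocSemiring α] (s : Finset ι)
    (M : ι → Matrix m n α) (A : Matrix m n α) : (∑ i ∈ s, M i) ⊙ A = ∑ i ∈ s, M i ⊙ A := by
  ext i j
  simp only [hadamard_apply, Matrix.sum_apply, Finset.sum_mul]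

theorem sum_conjTranspose_mul_self_eq_of_forall_sum_eq {n ι κ R : Type*} [Fintype n]
    [Fintype ι] [Fintype κ] [CommSemiring R] [StarRing R] {A : ι → Matrix n n R}
    {B : κ → Matrix n n R} (h : ∀ ρ, ∑ i, A i * ρ * (A i)ᴴ = ∑ j, B j * ρ * (B j)ᴴ) :
    ∑ i, (A i)ᴴ * A i = ∑ j, (B j)ᴴ * B j := by
  refine ext_iff_trace_mul_left.mpr fun x => ?_
  have hcycle (C : Matrix n n R) : trace (x * (Cᴴ * C)) = trace (C * x * Cᴴ) := by
    rw [← Matrix.mul_assoc, trace_mul_cycle]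
  simp only [Finset.mul_sum, trace_sum, hcycle]
  rw [← trace_sum, ← trace_sum, h x]

theorem exists_fin_kraus_sum_eq_of_card_le {σ n R : Type*} [Fintype σ] [Fintype n] [Semiring R]
    [StarRing R] {m : ℕ} (P : Matrix n n R → Prop) (hP : P 0) (K : σ → Matrix n n R)
    (hK : ∀ s, P (K s)) (hm : Fintype.card σ ≤ m) :
    ∃ L : Fin m → Matrix n n R, (∀ j, P (L j)) ∧
      ∀ ρ, ∑ j, L j * ρ * (L j)ᴴ = ∑ s, K s * ρ * (K s)ᴴ := by
  let E : Fin m ≃ σ ⊕ Fin (m - Fintype.card σ) :=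
    Fintype.equivOfCardEq (by simp only [Fintype.card_sum, Fintype.card_fin]; omega)
  refine ⟨fun j => Sum.elim K 0 (E j), fun j => ?_, fun ρ => ?_⟩
  · change P (Sum.elim K 0 (E j))
    rcases E j with s | k
    exacts [hK s, hP]
  · rw [E.sum_comp (fun x => Sum.elim K 0 x * ρ * (Sum.elim K 0 x)ᴴ), Fintype.sum_sum_type]
    simp

open scoped ComplexOrder MatrixOrder in
theorem exists_sum_vecMulVec_star_eq {ι n 𝕜 : Type*} [Fintype ι] [Fintype n] [DecidableEq n]
    [RCLike 𝕜] (z : ι → n → 𝕜) :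
    ∃ e : n → n → 𝕜, ∑ i, vecMulVec (z i) (star (z i)) = ∑ k, vecMulVec (e k) (star (e k)) := by
  have hpsd : (∑ i, vecMulVec (z i) (star (z i))).PosSemidef :=
    posSemidef_sum _ fun i _ => posSemidef_vecMulVec_self_star (z i)
  obtain ⟨B, hB⟩ := CStarAlgebra.nonneg_iff_eq_star_mul_self.mp hpsd.nonneg
  refine ⟨fun k j => star (B k j), ?_⟩
  rw [hB]
  ext i j
  simp [mul_apply, vecMulVec_apply, Matrix.sum_apply]

theorem exists_apply_eq_zero_and_vecMulVec_add_vecMulVec_eq {n 𝕜 : Type*} [RCLike 𝕜]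
    (u c : n → 𝕜) (a : n) :
    ∃ u' w : n → 𝕜, w a = 0 ∧ vecMulVec u (star u) + vecMulVec c (star c) =
      vecMulVec u' (star u') + vecMulVec w (star w) := by
  by_cases hc : c a = 0
  · exact ⟨u, c, hc, rfl⟩
  set r : 𝕜 := ((√(‖u a‖ ^ 2 + ‖c a‖ ^ 2) : ℝ) : 𝕜)
  have hr : r * r = u a * star (u a) + c a * star (c a) := by
    simp only [r, ← RCLike.ofReal_mul, RCLike.star_def, RCLike.mul_conj]
    rw [Real.mul_self_sqrt (by positivity)]
    push_cast; ring
  have hr0 : r ≠ 0 := by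
    simp only [r, ne_eq, RCLike.ofReal_eq_zero]
    exact (Real.sqrt_pos.mpr (by positivity)).ne'
  have hrs : star r = r := RCLike.conj_ofReal _
  -- `(u', w)` is `(u, c)` multiplied by the unitary `r⁻¹ • !![ū_a, c̄_a; c_a, -u_a]`
  refine ⟨r⁻¹ • (star (u a) • u + star (c a) • c), r⁻¹ • (c a • u - u a • c), ?_, ?_⟩
  · simp only [Pi.smul_apply, Pi.sub_apply, smul_eq_mul]
    ring
  · ext i j
    simp only [Matrix.add_apply, vecMulVec_apply, Pi.smul_apply, Pi.add_apply, Pi.sub_apply,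
      Pi.star_apply, smul_eq_mul, star_mul', star_add, star_sub, star_inv₀, hrs, star_star]
    field_simp
    linear_combination (u i * star (u j) + c i * star (c j)) * hr

section

variable {d : ℕ}

theorem isIncoherentKraus_zero : IsIncoherentKraus (0 : Matrix (Fin d) (Fin d) ℂ) :=
  fun _ _ _ h => absurd rfl h

def incoherentOp (g : Fin d → Fin d) (c : Fin d → ℂ) : Matrix (Fin d) (Fin d) ℂ :=
  of fun i j => if g j = i then c j else 0

@[simp]
theorem incoherentOp_zero (g : Fin d → Fin d) : incoherentOp g 0 = 0 := by
  ext; simp [incoherentOp]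

theorem isIncoherentKraus_incoherentOp (g : Fin d → Fin d) (c : Fin d → ℂ) :
    IsIncoherentKraus (incoherentOp g c) := by
  intro j i₁ i₂ h₁ h₂
  simp only [incoherentOp, of_apply, ne_eq, ite_eq_right_iff, not_forall] at h₁ h₂
  exact h₁.1.symm.trans h₂.1

theorem IsIncoherentKraus.exists_eq_incoherentOp {K : Matrix (Fin d) (Fin d) ℂ}
    (hK : IsIncoherentKraus K) : ∃ g c, K = incoherentOp g c := by
  classical
  let g j : Fin d := if h : ∃ i, K i j ≠ 0 then h.choose else j
  have hg : ∀ i j, K i j ≠ 0 → g j = i := fun i j hij => by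
    have h : ∃ i, K i j ≠ 0 := ⟨i, hij⟩
    simp only [g, dif_pos h]
    exact hK j _ _ h.choose_spec hij
  refine ⟨g, fun j => K (g j) j, ?_⟩
  ext i j
  by_cases hij : g j = i
  · simp [incoherentOp, hij]
  · simp only [incoherentOp, of_apply, if_neg hij]
    exact not_not.mp (mt (hg i j) hij)

theorem incoherentOp_update_of_apply_eq_zero (g : Fin d → Fin d) {c : Fin d → ℂ} {a : Fin d}
    (hc : c a = 0) (i : Fin d) : incoherentOp (Function.update g a i) c = incoherentOp g c := by
  ext i' j
  by_cases hj : j = a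
  · subst hj; simp [incoherentOp, hc]
  · simp [incoherentOp, Function.update_of_ne hj]

theorem incoherentOp_mul_mul_conjTranspose (g : Fin d → Fin d) (c : Fin d → ℂ)
    (ρ : Matrix (Fin d) (Fin d) ℂ) :
    incoherentOp g c * ρ * (incoherentOp g c)ᴴ =
      incoherentOp g 1 * (vecMulVec c (star c) ⊙ ρ) * (incoherentOp g 1)ᴴ := by
  have hdiag : incoherentOp g c = incoherentOp g 1 * diagonal c := by
    ext i j; simp [incoherentOp, mul_diagonal]
  have hconj : diagonal c * ρ * (diagonal c)ᴴ = vecMulVec c (star c) ⊙ ρ := by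
    ext i j; simp [diagonal_mul, mul_diagonal, vecMulVec_apply, hadamard_apply]; ring
  rw [hdiag, conjTranspose_mul, ← hconj]
  simp only [Matrix.mul_assoc]

theorem sum_incoherentOp_mul_mul_conjTranspose {ι : Type*} [Fintype ι] (g : Fin d → Fin d)
    (z : ι → Fin d → ℂ) (ρ : Matrix (Fin d) (Fin d) ℂ) :
    ∑ i, incoherentOp g (z i) * ρ * (incoherentOp g (z i))ᴴ =
      incoherentOp g 1 * ((∑ i, vecMulVec (z i) (star (z i))) ⊙ ρ) * (incoherentOp g 1)ᴴ := by
  rw [Matrix.sum_hadamard, Matrix.mul_sum, Matrix.sum_mul]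
  exact Finset.sum_congr rfl fun i _ => incoherentOp_mul_mul_conjTranspose g (z i) ρ

theorem sum_incoherentOp_mul_mul_conjTranspose_eq {ι κ : Type*} [Fintype ι] [Fintype κ]
    (g : Fin d → Fin d) {z : ι → Fin d → ℂ} {e : κ → Fin d → ℂ}
    (h : ∑ i, vecMulVec (z i) (star (z i)) = ∑ k, vecMulVec (e k) (star (e k)))
    (ρ : Matrix (Fin d) (Fin d) ℂ) :
    ∑ i, incoherentOp g (z i) * ρ * (incoherentOp g (z i))ᴴ =
      ∑ k, incoherentOp g (e k) * ρ * (incoherentOp g (e k))ᴴ := by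
  rw [sum_incoherentOp_mul_mul_conjTranspose, sum_incoherentOp_mul_mul_conjTranspose, h]

variable [NeZero d]

def IsPatternKrausSum (Φ : Matrix (Fin d) (Fin d) ℂ → Matrix (Fin d) (Fin d) ℂ) : Prop :=
  ∃ (u : (Fin d → Fin d) → Fin d → ℂ) (m : ℕ) (z : Fin m → Fin d → ℂ), ∀ ρ,
    Φ ρ = ∑ g, incoherentOp g (u g) * ρ * (incoherentOp g (u g))ᴴ +
      ∑ i, incoherentOp 0 (z i) * ρ * (incoherentOp 0 (z i))ᴴ

namespace IsPatternKrausSum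

theorem zero : IsPatternKrausSum fun (_ : Matrix (Fin d) (Fin d) ℂ) => 0 :=
  ⟨0, 0, Fin.elim0, fun ρ => by simp⟩

variable {Φ : Matrix (Fin d) (Fin d) ℂ → Matrix (Fin d) (Fin d) ℂ}

theorem add_zero_pattern (hΦ : IsPatternKrausSum Φ) (c : Fin d → ℂ) :
    IsPatternKrausSum fun ρ => Φ ρ + incoherentOp 0 c * ρ * (incoherentOp 0 c)ᴴ := by
  obtain ⟨u, m, z, hΦ⟩ := hΦ
  refine ⟨u, m + 1, Fin.cons c z, fun ρ => ?_⟩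
  simp only [hΦ, Fin.sum_univ_succ, Fin.cons_zero, Fin.cons_succ]
  abel

theorem add_of_forall_notMem_eq_zero (s : Finset (Fin d)) :
    ∀ {Φ : Matrix (Fin d) (Fin d) ℂ → Matrix (Fin d) (Fin d) ℂ} {g : Fin d → Fin d}
      (c : Fin d → ℂ), IsPatternKrausSum Φ → (∀ j ∉ s, g j = 0) →
      IsPatternKrausSum fun ρ => Φ ρ + incoherentOp g c * ρ * (incoherentOp g c)ᴴ := by
  classical
  induction s using Finset.induction_on with
  | empty =>
    intro Φ g c hΦ hg
    obtain rfl : g = 0 := funext fun j => hg j (Finset.notMem_empty j)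
    exact hΦ.add_zero_pattern c
  | insert a s _ ih =>
    intro Φ g c hΦ hg
    obtain ⟨u, m, z, hΦ⟩ := hΦ
    obtain ⟨u', w, hwa, hgram⟩ := exists_apply_eq_zero_and_vecMulVec_add_vecMulVec_eq (u g) c a
    have hrotate (ρ) : incoherentOp g (u g) * ρ * (incoherentOp g (u g))ᴴ +
        incoherentOp g c * ρ * (incoherentOp g c)ᴴ =
        incoherentOp g u' * ρ * (incoherentOp g u')ᴴ +
          incoherentOp g w * ρ * (incoherentOp g w)ᴴ := by
      simpa [Fin.sum_univ_two] using sum_incoherentOp_mul_mul_conjTranspose_eq g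
        (z := ![u g, c]) (e := ![u', w]) (by simpa [Fin.sum_univ_two] using hgram) ρ
    have hΨ : IsPatternKrausSum fun ρ =>
        ∑ h, incoherentOp h (Function.update u g u' h) * ρ *
          (incoherentOp h (Function.update u g u' h))ᴴ +
        ∑ i, incoherentOp 0 (z i) * ρ * (incoherentOp 0 (z i))ᴴ := ⟨_, m, z, fun ρ => rfl⟩
    have hg' : ∀ j ∉ s, Function.update g a 0 j = 0 := fun j hj => by
      by_cases hja : j = a
      · simp [hja]
      · rw [Function.update_of_ne hja]; exact hg j (by simp [hja, hj])
    -- `u g` and `c` become the new slot value `u'` and `w`, which `ih` files under `update g a 0`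
    convert ih w hΨ hg' using 2 with ρ
    rw [incoherentOp_update_of_apply_eq_zero g hwa, hΦ ρ]
    simp only [Function.apply_update (fun h v => incoherentOp h v * ρ * (incoherentOp h v)ᴴ),
      Finset.sum_update_of_mem (Finset.mem_univ g),
      Finset.sum_eq_add_sum_sdiff_singleton_of_mem (Finset.mem_univ g)
        (fun h => incoherentOp h (u h) * ρ * (incoherentOp h (u h))ᴴ)]
    linear_combination (norm := abel) hrotate ρ

theorem add (hΦ : IsPatternKrausSum Φ) (g : Fin d → Fin d) (c : Fin d → ℂ) :
    IsPatternKrausSum fun ρ => Φ ρ + incoherentOp g c * ρ * (incoherentOp g c)ᴴ :=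
  add_of_forall_notMem_eq_zero Finset.univ c hΦ fun j hj => absurd (Finset.mem_univ j) hj

end IsPatternKrausSum

theorem isPatternKrausSum_sum {ι : Type*} (s : Finset ι) (g : ι → Fin d → Fin d)
    (c : ι → Fin d → ℂ) :
    IsPatternKrausSum fun ρ =>
      ∑ i ∈ s, incoherentOp (g i) (c i) * ρ * (incoherentOp (g i) (c i))ᴴ := by
  classical
  induction s using Finset.induction_on with
  | empty => simpa using IsPatternKrausSum.zero
  | insert a s ha ih =>
    simp only [Finset.sum_insert ha, add_comm (incoherentOp (g a) (c a) * _ * _)]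
    exact ih.add (g a) (c a)

theorem exists_incoherentKraus_sum_pattern_eq {ι : Type*} [Fintype ι]
    {K : ι → Matrix (Fin d) (Fin d) ℂ} (hK : ∀ i, IsIncoherentKraus (K i)) :
    ∃ L : (Fin d → Fin d) ⊕ Fin d → Matrix (Fin d) (Fin d) ℂ, (∀ s, IsIncoherentKraus (L s)) ∧
      ∀ ρ, ∑ s, L s * ρ * (L s)ᴴ = ∑ i, K i * ρ * (K i)ᴴ := by
  choose g c hgc using fun i => (hK i).exists_eq_incoherentOp
  obtain ⟨u, m, z, hz⟩ := isPatternKrausSum_sum Finset.univ g c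
  obtain ⟨e, he⟩ := exists_sum_vecMulVec_star_eq z
  refine ⟨Sum.elim (fun g => incoherentOp g (u g)) (fun k => incoherentOp 0 (e k)), ?_,
    fun ρ => ?_⟩
  · rintro (g | k) <;> exact isIncoherentKraus_incoherentOp _ _
  · simp only [hgc, hz ρ, Fintype.sum_sum_type, Sum.elim_inl, Sum.elim_inr,
      sum_incoherentOp_mul_mul_conjTranspose_eq 0 he ρ]

end

/-- Every qutrit incoherent operation admits a decomposition into at most 32
incoherent Kraus operators. -/
theorem qutrit_IO_32_kraus
    (Φ : Matrix (Fin 3) (Fin 3) ℂ → Matrix (Fin 3) (Fin 3) ℂ)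
    (h : ∃ (n : ℕ) (K : Fin n → Matrix (Fin 3) (Fin 3) ℂ),
      (∀ i, IsIncoherentKraus (K i)) ∧
      (∑ i, (K i)ᴴ * K i = 1) ∧
      (∀ ρ, Φ ρ = ∑ i, K i * ρ * (K i)ᴴ)) :
    ∃ L : Fin 32 → Matrix (Fin 3) (Fin 3) ℂ,
      (∀ j, IsIncoherentKraus (L j)) ∧
      (∑ j, (L j)ᴴ * L j = 1) ∧
      (∀ ρ, Φ ρ = ∑ j, L j * ρ * (L j)ᴴ) := by
  obtain ⟨n, K, hK, hsum, hΦ⟩ := h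
  obtain ⟨L, hL, hLK⟩ := exists_incoherentKraus_sum_pattern_eq hK
  obtain ⟨L', hL', hL'L⟩ := exists_fin_kraus_sum_eq_of_card_le (m := 32) IsIncoherentKraus
    isIncoherentKraus_zero L hL (by simp)
  have hL'K (ρ) : ∑ j, L' j * ρ * (L' j)ᴴ = ∑ i, K i * ρ * (K i)ᴴ := (hL'L ρ).trans (hLK ρ)
  exact ⟨L', hL', (sum_conjTranspose_mul_self_eq_of_forall_sum_eq hL'K).trans hsum,
    fun ρ => (hΦ ρ).trans (hL'K ρ).symm⟩
end

section
/- Let a₃₂, a₂₄, a₃₇, a₃₉, b₃₂, b₂₄ ∈ ℂ and define the 3×3 matrices (with Eⱼₖ denoting matrix units): M₁ = a₃₂·E₃₁ + b₃₂·E₃₂, M₂ = a₂₄·E₂₁ + b₂₄·E₃₂, M₃ = a₃₇·E₃₁, M₄ = a₃₉·E₂₁. Then there exist 3×3 complex matrices L₁, L₂, L₃, with L₁ supported on the entries (3,1) and (3,2), L₂ supported on the entries (2,1) and (3,2), and L₃ supported on the entry (2,1) (in particular all three are incoherent Kraus operators), such that ∑ₖ₌₁⁴ Mₖ ρ Mₖ†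 = ∑ₖ₌₁³ Lₖ ρ Lₖ† for all ρ ∈ M₃(ℂ). -/
open Matrix

/-- The 3×3 matrix unit with a 1 in row `j`, column `k` (0-indexed). -/
def E (j k : Fin 3) : Matrix (Fin 3) (Fin 3) ℂ := Matrix.single j k 1

/-- `L` is supported on the set `S` of (row, column) positions: every entry of
`L` outside `S` vanishes. -/
def SupportedOn (L : Matrix (Fin 3) (Fin 3) ℂ) (S : Set (Fin 3 × Fin 3)) : Prop :=
  ∀ p q, L p q ≠ 0 → (p, q) ∈ S

/-!
A Kraus operator `∑ₐ cₐ • Bₐ` built on fixed matrices `Bₐ` acts as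
`ρ ↦ ∑ₐ ∑_b cₐ c̄_b Bₐ ρ B_bᴴ`, so a family of such operators is determined by the Gram
matrix `∑ c cᴴ` of its coefficient vectors. On the positions (3,1), (3,2), (2,1) the
coefficient vectors of `M₁, …, M₄` have a tridiagonal Gram matrix, and three Givens
rotations, each of which replaces two vectors by a unitary mix of them without changing the
Gram matrix, bring it to the form `∑ₖ lₖ lₖᴴ` with `(l₁ l₂ l₃)` lower bidiagonal: a Cholesky
factorization, whose columns are the coefficient vectors of `L₁, L₂, L₃`.
-/

open ComplexConjugate

section GramChannel

variable {ι m n : Type*} [Fintype ι] [Fintype n]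

def gramChannel (B : ι → Matrix m n ℂ) (G : Matrix ι ι ℂ) (ρ : Matrix n n ℂ) : Matrix m m ℂ :=
  ∑ a, ∑ b, G a b • (B a * ρ * (B b)ᴴ)

lemma gramChannel_add (B : ι → Matrix m n ℂ) (G H : Matrix ι ι ℂ) (ρ : Matrix n n ℂ) :
    gramChannel B (G + H) ρ = gramChannel B G ρ + gramChannel B H ρ := by
  simp only [gramChannel, Matrix.add_apply, add_smul, Finset.sum_add_distrib]

lemma sum_smul_mul_mul_conjTranspose_sum_smul (B : ι → Matrix m n ℂ) (c : ι → ℂ)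
    (ρ : Matrix n n ℂ) :
    (∑ a, c a • B a) * ρ * (∑ a, c a • B a)ᴴ = gramChannel B (vecMulVec c (star c)) ρ := by
  simp only [gramChannel, conjTranspose_sum, conjTranspose_smul, Matrix.sum_mul, Matrix.mul_sum,
    Matrix.smul_mul, Matrix.mul_smul, Finset.smul_sum, smul_smul, vecMulVec_apply, Pi.star_apply,
    mul_comm]
  exact Finset.sum_comm

end GramChannel

lemma exists_givens_rotation {ι : Type*} (u v : ι → ℂ) (i : ι) :
    ∃ u' v' : ι → ℂ, vecMulVec u' (star u') + vecMulVec v' (star v') =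
        vecMulVec u (star u) + vecMulVec v (star v) ∧ v' i = 0 ∧
      ∀ j, u j = 0 → v j = 0 → u' j = 0 ∧ v' j = 0 := by
  have hnonneg : 0 ≤ Complex.normSq (u i) + Complex.normSq (v i) :=
    add_nonneg (Complex.normSq_nonneg _) (Complex.normSq_nonneg _)
  by_cases h : Complex.normSq (u i) + Complex.normSq (v i) = 0
  · rw [add_eq_zero_iff_of_nonneg (Complex.normSq_nonneg _) (Complex.normSq_nonneg _)] at h
    exact ⟨u, v, rfl, Complex.normSq_eq_zero.mp h.2, fun _ hu hv => ⟨hu, hv⟩⟩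
  set r : ℝ := Real.sqrt (Complex.normSq (u i) + Complex.normSq (v i))
  have hr : (r : ℂ) * r = u i * conj (u i) + v i * conj (v i) := by
    simp only [Complex.mul_conj, ← Complex.ofReal_add, ← Complex.ofReal_mul,
      Real.mul_self_sqrt hnonneg, r]
  have hr0 : (r : ℂ) ≠ 0 :=
    Complex.ofReal_ne_zero.mpr (Real.sqrt_ne_zero'.mpr (hnonneg.lt_of_ne' h))
  -- `(u', v') = (u, v) U` for the unitary `U = r⁻¹ [[ū_i, v_i], [v̄_i, -u_i]]`.
  refine ⟨(r : ℂ)⁻¹ • (conj (u i) • u + conj (v i) • v), (r : ℂ)⁻¹ • (v i • u - u i • v),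
    ?_, ?_, ?_⟩
  · ext a b
    simp only [vecMulVec_apply, Matrix.add_apply, Pi.star_apply, Pi.smul_apply, Pi.add_apply,
      Pi.sub_apply, smul_eq_mul, star_mul', star_add, star_sub, star_inv₀, RCLike.star_def,
      Complex.conj_conj, Complex.conj_ofReal]
    field_simp
    linear_combination -(u a * conj (u b) + v a * conj (v b)) * hr
  · simp only [Pi.smul_apply, Pi.sub_apply, smul_eq_mul]; ring
  · intro j hu hv
    simp [hu, hv]

lemma exists_bidiagonal_gram_eq {m₁ m₂ m₃ m₄ : Fin 3 → ℂ} (h₁ : m₁ 2 = 0)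
    (h₂ : m₂ 0 = 0) (h₃ : m₃ 2 = 0) (h₄₀ : m₄ 0 = 0) (h₄₁ : m₄ 1 = 0) :
    ∃ l₁ l₂ l₃ : Fin 3 → ℂ, l₁ 2 = 0 ∧ l₂ 0 = 0 ∧ l₃ 0 = 0 ∧ l₃ 1 = 0 ∧
      vecMulVec m₁ (star m₁) + vecMulVec m₂ (star m₂) + vecMulVec m₃ (star m₃) +
          vecMulVec m₄ (star m₄) =
        vecMulVec l₁ (star l₁) + vecMulVec l₂ (star l₂) + vecMulVec l₃ (star l₃) := by
  obtain ⟨l₁, n, hl₁n, hn₀, hsupp₁⟩ := exists_givens_rotation m₁ m₃ 0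
  obtain ⟨l₂, n', hl₂n', hn'₁, hsupp₂⟩ := exists_givens_rotation m₂ n 1
  obtain ⟨l₃, z, hl₃z, hz₂, hsupp₃⟩ := exists_givens_rotation n' m₄ 2
  have hn'₀ := (hsupp₂ 0 h₂ hn₀).2
  have hz : z = 0 := by
    ext j
    fin_cases j
    exacts [(hsupp₃ 0 hn'₀ h₄₀).2, (hsupp₃ 1 hn'₁ h₄₁).2, hz₂]
  refine ⟨l₁, l₂, l₃, (hsupp₁ 2 h₁ h₃).1, (hsupp₂ 0 h₂ hn₀).1, (hsupp₃ 0 hn'₀ h₄₀).1,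
    (hsupp₃ 1 hn'₁ h₄₁).1, ?_⟩
  rw [hz] at hl₃z
  simp only [star_zero, vecMulVec_zero, add_zero] at hl₃z
  linear_combination (norm := abel) -hl₃z - hl₁n - hl₂n'

def krausOf {ι : Type*} [Fintype ι] (pos : ι → Fin 3 × Fin 3) (c : ι → ℂ) :
    Matrix (Fin 3) (Fin 3) ℂ :=
  ∑ a, c a • E (pos a).1 (pos a).2

lemma supportedOn_krausOf {ι : Type*} [Fintype ι] {pos : ι → Fin 3 × Fin 3} {c : ι → ℂ}
    {S : Set (Fin 3 × Fin 3)} (h : ∀ a, c a ≠ 0 → pos a ∈ S) :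
    SupportedOn (krausOf pos c) S := by
  intro p q hpq
  rw [krausOf, Matrix.sum_apply] at hpq
  obtain ⟨a, -, ha⟩ := Finset.exists_ne_zero_of_sum_ne_zero hpq
  simp only [E, Matrix.smul_apply, Matrix.single_apply, smul_eq_mul, mul_ite, mul_one, mul_zero,
    ne_eq, ite_eq_right_iff, Classical.not_imp] at ha
  obtain ⟨⟨rfl, rfl⟩, hc⟩ := ha
  exact h a hc

def krausPositions : Fin 3 → Fin 3 × Fin 3 := ![(2, 0), (2, 1), (1, 0)]

theorem reduce_32_24_37_39 (a₃₂ a₂₄ a₃₇ a₃₉ b₃₂ b₂₄ : ℂ) :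
    ∃ L₁ L₂ L₃ : Matrix (Fin 3) (Fin 3) ℂ,
      SupportedOn L₁ {(2, 0), (2, 1)} ∧
      SupportedOn L₂ {(1, 0), (2, 1)} ∧
      SupportedOn L₃ {(1, 0)} ∧
      ∀ ρ : Matrix (Fin 3) (Fin 3) ℂ,
        (a₃₂ • E 2 0 + b₃₂ • E 2 1) * ρ * (a₃₂ • E 2 0 + b₃₂ • E 2 1)ᴴ +
        (a₂₄ • E 1 0 + b₂₄ • E 2 1) * ρ * (a₂₄ • E 1 0 + b₂₄ • E 2 1)ᴴ +
        (a₃₇ • E 2 0) * ρ * (a₃₇ • E 2 0)ᴴ +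
        (a₃₉ • E 1 0) * ρ * (a₃₉ • E 1 0)ᴴ =
        L₁ * ρ * L₁ᴴ + L₂ * ρ * L₂ᴴ + L₃ * ρ * L₃ᴴ := by
  obtain ⟨l₁, l₂, l₃, hl₁, hl₂, hl₃₀, hl₃₁, hgram⟩ :=
    exists_bidiagonal_gram_eq (m₁ := ![a₃₂, b₃₂, 0]) (m₂ := ![0, b₂₄, a₂₄])
      (m₃ := ![a₃₇, 0, 0]) (m₄ := ![0, 0, a₃₉]) rfl rfl rfl rfl rfl
  refine ⟨krausOf krausPositions l₁, krausOf krausPositions l₂, krausOf krausPositions l₃,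
    ?_, ?_, ?_, fun ρ => ?_⟩
  · exact supportedOn_krausOf fun a ha => by fin_cases a <;> simp_all [krausPositions]
  · exact supportedOn_krausOf fun a ha => by fin_cases a <;> simp_all [krausPositions]
  · exact supportedOn_krausOf fun a ha => by fin_cases a <;> simp_all [krausPositions]
  rw [krausOf, krausOf, krausOf]
  simp only [sum_smul_mul_mul_conjTranspose_sum_smul, ← gramChannel_add, ← hgram]
  simp only [gramChannel_add, ← sum_smul_mul_mul_conjTranspose_sum_smul, Fin.sum_univ_three,
    krausPositions]
  simp only [cons_val, zero_smul, add_zero, zero_add]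
  rw [add_comm (b₂₄ • E 2 1)]
end

section
/- Let a₈, a₁₂, a₃₈, a₃₉, b₈, b₁₂ ∈ ℂ and define the 3×3 matrices: M₁ = a₈·E₂₁ + b₈·E₂₂, M₂ = a₁₂·E₁₁ + b₁₂·E₂₂, M₃ = a₃₉·E₂₁, M₄ = a₃₈·E₁₁. Then there exist 3×3 complex matrices L₁, L₂, L₃, with L₁ supported on the entries (2,1) and (2,2), L₂ supported on the entries (1,1) and (2,2), and L₃ supported on the entry (1,1) (in particular all three are incoherent Kraus operators), such that ∑ₖ₌₁⁴ Mₖ ρ Mₖ† = ∑ₖ₌₁³ Lₖ ρ Lₖ† for all ρ ∈ M₃(ℂ). -/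
/-!
A family of Kraus operators `Kₖ = ∑ₑ Cₖₑ • Bₑ`, all combinations of the same matrices `Bₑ`,
defines a quantum operation that depends on the coefficient matrix `C` only through its Gram
matrix `Cᴴ * C`. Here the `Bₑ` are `E 0 0`, `E 1 0`, `E 1 1`, and the Gram matrix of the given
four operators is tridiagonal in the order `E 1 0`, `E 1 1`, `E 0 0`. A Cholesky factorization
of it, computed one pivot at a time, is bidiagonal: its three rows are Kraus operators with the
required supports.
-/

open Matrix ComplexConjugate

theorem SupportedOn.mono {L : Matrix (Fin 3) (Fin 3) ℂ} {S T : Set (Fin 3 × Fin 3)}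
    (h : SupportedOn L S) (hST : S ⊆ T) : SupportedOn L T :=
  fun p q hpq => hST (h p q hpq)

theorem SupportedOn.add {L L' : Matrix (Fin 3) (Fin 3) ℂ} {S : Set (Fin 3 × Fin 3)}
    (h : SupportedOn L S) (h' : SupportedOn L' S) : SupportedOn (L + L') S :=
  fun p q hpq => by_contra fun hS => hpq <| by
    rw [Matrix.add_apply, not_not.1 ((h p q).mt hS), not_not.1 ((h' p q).mt hS), add_zero]

theorem supportedOn_smul_E (a : ℂ) (i j : Fin 3) : SupportedOn (a • E i j) {(i, j)} := by
  intro p q hpq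
  simp only [E, Matrix.smul_apply, single_apply, smul_eq_mul, mul_ite, mul_one, mul_zero, ne_eq,
    ite_eq_right_iff, and_imp, Classical.not_imp] at hpq
  obtain ⟨rfl, rfl, -⟩ := hpq
  rfl

theorem supportedOn_smul_E_add_smul_E (a b : ℂ) (i j k l : Fin 3) :
    SupportedOn (a • E i j + b • E k l) {(i, j), (k, l)} :=
  ((supportedOn_smul_E a i j).mono (by simp)).add ((supportedOn_smul_E b k l).mono (by simp))

section Kraus

variable {R : Type*} [CommSemiring R] [StarRing R] {ι κ κ' m n : Type*}
  [Fintype ι] [Fintype κ] [Fintype κ'] [Fintype n]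

def krausOp (C : Matrix κ ι R) (B : ι → Matrix m n R) (ρ : Matrix n n R) : Matrix m m R :=
  ∑ k, (∑ e, C k e • B e) * ρ * (∑ e, C k e • B e)ᴴ

theorem krausOp_eq_sum_gram (C : Matrix κ ι R) (B : ι → Matrix m n R) (ρ : Matrix n n R) :
    krausOp C B ρ = ∑ e, ∑ f, (Cᴴ * C) f e • (B e * ρ * (B f)ᴴ) := by
  simp only [krausOp, conjTranspose_sum, conjTranspose_smul, Matrix.sum_mul, Matrix.mul_sum,
    Matrix.smul_mul, Matrix.mul_smul, mul_apply, conjTranspose_apply, Finset.sum_smul,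
    Finset.smul_sum, smul_smul]
  exact Finset.sum_comm.trans <|
    (Finset.sum_congr rfl fun _ _ => Finset.sum_comm).trans Finset.sum_comm

theorem krausOp_eq_of_conjTranspose_mul_self_eq {C : Matrix κ ι R} {D : Matrix κ' ι R}
    (h : Cᴴ * C = Dᴴ * D) (B : ι → Matrix m n R) (ρ : Matrix n n R) :
    krausOp C B ρ = krausOp D B ρ := by
  rw [krausOp_eq_sum_gram, krausOp_eq_sum_gram, h]

end Kraus

section Cholesky

variable {𝕜 : Type*} [RCLike 𝕜]

theorem exists_norm_sq_eq {s : ℝ} (hs : 0 ≤ s) : ∃ x : 𝕜, ‖x‖ ^ 2 = s :=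
  ⟨(√s : 𝕜), by rw [RCLike.norm_ofReal, sq_abs, Real.sq_sqrt hs]⟩

/-- One pivot of a Cholesky factorization of the positive semidefinite matrix
`!![s, c; conj c, t]`. -/
theorem exists_conj_mul_eq_of_norm_sq_le_mul {s t : ℝ} (hs : 0 ≤ s) (ht : 0 ≤ t) {c : 𝕜}
    (h : ‖c‖ ^ 2 ≤ s * t) : ∃ x y : 𝕜, ‖x‖ ^ 2 = s ∧ conj x * y = c ∧ ‖y‖ ^ 2 ≤ t := by
  rcases hs.eq_or_lt with rfl | hs
  · refine ⟨0, 0, by simp, ?_, by simpa using ht⟩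
    simpa [eq_comm] using h
  refine ⟨(√s : 𝕜), c / √s, ?_, ?_, ?_⟩
  · rw [RCLike.norm_ofReal, sq_abs, Real.sq_sqrt hs.le]
  · have : (√s : 𝕜) ≠ 0 := RCLike.ofReal_ne_zero.mpr (Real.sqrt_pos.mpr hs).ne'
    rw [RCLike.conj_ofReal, mul_div_cancel₀ _ this]
  · rw [norm_div, RCLike.norm_ofReal, abs_of_nonneg (Real.sqrt_nonneg s), div_pow,
      Real.sq_sqrt hs.le, div_le_iff₀' hs]
    exact h

end Cholesky

theorem exists_conjTranspose_mul_self_eq_bidiagonal (a₈ a₁₂ a₃₈ a₃₉ b₈ b₁₂ : ℂ) :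
    ∃ x y u v w : ℂ,
      (!![0, a₈, b₈; a₁₂, 0, b₁₂; 0, a₃₉, 0; a₃₈, 0, 0] : Matrix (Fin 4) (Fin 3) ℂ)ᴴ *
          !![0, a₈, b₈; a₁₂, 0, b₁₂; 0, a₃₉, 0; a₃₈, 0, 0] =
        (!![0, x, y; u, 0, v; w, 0, 0] : Matrix (Fin 3) (Fin 3) ℂ)ᴴ *
          !![0, x, y; u, 0, v; w, 0, 0] := by
  obtain ⟨x, y, hx, hxy, hy⟩ := exists_conj_mul_eq_of_norm_sq_le_mul (c := conj a₈ * b₈)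
    (s := ‖a₈‖ ^ 2 + ‖a₃₉‖ ^ 2) (t := ‖b₈‖ ^ 2) (by positivity) (by positivity)
    (by rw [norm_mul, RCLike.norm_conj]; nlinarith [sq_nonneg ‖a₃₉‖, sq_nonneg ‖b₈‖])
  obtain ⟨v, u, hv, hvu, hu⟩ := exists_conj_mul_eq_of_norm_sq_le_mul (c := conj b₁₂ * a₁₂)
    (s := ‖b₈‖ ^ 2 + ‖b₁₂‖ ^ 2 - ‖y‖ ^ 2) (t := ‖a₁₂‖ ^ 2) (by nlinarith [sq_nonneg ‖b₁₂‖])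
    (by positivity)
    (by rw [norm_mul, RCLike.norm_conj]; nlinarith [sq_nonneg ‖b₁₂‖, sq_nonneg ‖a₁₂‖])
  obtain ⟨w, hw⟩ := exists_norm_sq_eq (𝕜 := ℂ) (s := ‖a₁₂‖ ^ 2 + ‖a₃₈‖ ^ 2 - ‖u‖ ^ 2)
    (by nlinarith [sq_nonneg ‖a₃₈‖])
  refine ⟨x, y, u, v, w, ?_⟩
  ext e f
  fin_cases e <;> fin_cases f <;>
    simp only [Fin.zero_eta, Fin.mk_one, Fin.reduceFinMk, Fin.isValue, mul_apply,
      conjTranspose_apply, of_apply, cons_val', cons_val, cons_val_zero, cons_val_one,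
      cons_val_fin_one, RCLike.star_def, Complex.conj_mul', Fin.sum_univ_four,
      Fin.sum_univ_three, norm_zero, Complex.ofReal_zero, ne_eq, OfNat.ofNat_ne_zero,
      not_false_eq_true, zero_pow, map_zero, zero_mul, mul_zero, zero_add, add_zero]
  · exact_mod_cast (by linarith : ‖a₁₂‖ ^ 2 + ‖a₃₈‖ ^ 2 = ‖u‖ ^ 2 + ‖w‖ ^ 2)
  · simpa [mul_comm] using congrArg conj hvu.symm
  · exact_mod_cast hx.symm
  · exact hxy.symm
  · exact hvu.symm
  · simpa [mul_comm] using congrArg conj hxy.symm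
  · exact_mod_cast (by linarith : ‖b₈‖ ^ 2 + ‖b₁₂‖ ^ 2 = ‖y‖ ^ 2 + ‖v‖ ^ 2)

theorem reduce_8_12_39_38 (a₈ a₁₂ a₃₈ a₃₉ b₈ b₁₂ : ℂ) :
    ∃ L₁ L₂ L₃ : Matrix (Fin 3) (Fin 3) ℂ,
      SupportedOn L₁ {(1, 0), (1, 1)} ∧
      SupportedOn L₂ {(0, 0), (1, 1)} ∧
      SupportedOn L₃ {(0, 0)} ∧
      ∀ ρ : Matrix (Fin 3) (Fin 3) ℂ,
        (a₈ • E 1 0 + b₈ • E 1 1) * ρ * (a₈ • E 1 0 + b₈ • E 1 1)ᴴ +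
        (a₁₂ • E 0 0 + b₁₂ • E 1 1) * ρ * (a₁₂ • E 0 0 + b₁₂ • E 1 1)ᴴ +
        (a₃₉ • E 1 0) * ρ * (a₃₉ • E 1 0)ᴴ +
        (a₃₈ • E 0 0) * ρ * (a₃₈ • E 0 0)ᴴ =
        L₁ * ρ * L₁ᴴ + L₂ * ρ * L₂ᴴ + L₃ * ρ * L₃ᴴ := by
  obtain ⟨x, y, u, v, w, hCD⟩ := exists_conjTranspose_mul_self_eq_bidiagonal a₈ a₁₂ a₃₈ a₃₉ b₈ b₁₂
  refine ⟨x • E 1 0 + y • E 1 1, u • E 0 0 + v • E 1 1, w • E 0 0,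
    supportedOn_smul_E_add_smul_E x y 1 0 1 1, supportedOn_smul_E_add_smul_E u v 0 0 1 1,
    supportedOn_smul_E w 0 0, fun ρ => ?_⟩
  simpa [krausOp, Fin.sum_univ_four, Fin.sum_univ_three] using
    krausOp_eq_of_conjTranspose_mul_self_eq hCD ![E 0 0, E 1 0, E 1 1] ρ
end

section
/- Let a₄, a₈, a₁₂, a₁₆, a₃₈, b₄, b₈, b₁₂, b₁₆ ∈ ℂ and define the 3×3 matrices: M₁ = a₄·E₁₁ + b₄·E₁₂, M₂ = a₈·E₂₁ + b₈·E₂₂, M₃ = a₃₈·E₁₁, M₄ = b₁₆·E₁₂ + a₁₆·E₂₁, M₅ = a₁₂·E₁₁ + b₁₂·E₂₂. Then there exist 3×3 complex matrices L₁, L₂, L₃, L₄, with L₁ supported on the entries (1,1) and (1,2), L₂ supported on the entries (2,1) and (2,2), L₃ supported on the entries (1,1) and (2,2), and L₄ supported on the entries (1,2) and (2,1) (in particular all four are incoherent Kraus operators), such that ∑ₖ₌₁⁵ Mₖ ρ Mₖ† = ∑ₖ₌₁⁴ Lₖ ρ Lₖ† for all ρ ∈ M₃(ℂ). -/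
open Matrix

/-!
Both sides are determined by their Choi coefficients `∑ K i p * conj (K j q)`. All operators
live on the positions `(0,0), (0,1), (1,0), (1,1)`, which the supports of `L₁, L₄, L₂, L₃` join
into a 4-cycle; the equality amounts to fixing the total weight `|K i p|²` at each position and
the cross term along each edge. Four of the `Mₖ` already sit on edges of the cycle; only the
weight `|a₃₈|²` at `(0,0)` has to be absorbed. Put weight `t ≥ |a₄|²` on the `(0,0)` end of the
first edge and go around the cycle: each edge's far end gets the weight that keeps the product
of its end weights, and the next edge gets the rest of that position's total. The intermediate
value theorem picks the `t` for which the cycle closes up at `(0,0)`. Complex entries with these moduli and cross terms then exist edge by edge.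
-/

open Set Complex ComplexConjugate

lemma mul_div_mul_cancel_of_le {u x : ℝ} (w : ℝ) (hu : 0 ≤ u) (hx : u ≤ x) :
    u * w / x * x = u * w :=
  div_mul_cancel_of_imp fun h => by rw [le_antisymm (h ▸ hx) hu, zero_mul]

lemma mul_div_le_of_le {u x : ℝ} (w : ℝ) (hu : 0 ≤ u) (hw : 0 ≤ w) (hx : u ≤ x) :
    u * w / x ≤ w :=
  div_le_of_le_mul₀ (hu.trans hx) hw (by rw [mul_comm]; exact mul_le_mul_of_nonneg_left hx hw)

lemma continuousOn_mul_div_of_le {S : Set ℝ} {X : ℝ → ℝ} {u : ℝ} (w : ℝ) (hu : 0 ≤ u)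
    (hX : ContinuousOn X S) (hle : ∀ t ∈ S, u ≤ X t) :
    ContinuousOn (fun t => u * w / X t) S := by
  rcases hu.eq_or_lt with rfl | hu
  · simpa using continuousOn_const
  · exact continuousOn_const.div hX fun t ht => (hu.trans_le (hle t ht)).ne'

lemma exists_add_eq_of_continuousOn {a T : ℝ} {φ : ℝ → ℝ} (haT : a ≤ T)
    (hφ : ContinuousOn φ (Icc a T)) (h0 : ∀ t ∈ Icc a T, 0 ≤ φ t)
    (hle : ∀ t ∈ Icc a T, φ t ≤ T - a) : ∃ t ∈ Icc a T, t + φ t = T := by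
  have ha : a ∈ Icc a T := ⟨le_rfl, haT⟩
  have hT : T ∈ Icc a T := ⟨haT, le_rfl⟩
  have hg : ContinuousOn (fun t => t + φ t) (Icc a T) := continuousOn_id.add hφ
  exact intermediate_value_Icc haT hg ⟨by linarith [hle a ha], by linarith [h0 T hT]⟩

theorem exists_four_cycle_split {p₁ p₂ q₁ q₂ r₁ r₂ s₁ s₂ e : ℝ}
    (hp₁ : 0 ≤ p₁) (hp₂ : 0 ≤ p₂) (hq₁ : 0 ≤ q₁) (hq₂ : 0 ≤ q₂)
    (hr₁ : 0 ≤ r₁) (hr₂ : 0 ≤ r₂) (hs₁ : 0 ≤ s₁) (hs₂ : 0 ≤ s₂) (he : 0 ≤ e) :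
    ∃ A₁ A₂ B₁ B₂ C₁ C₂ D₁ D₂ : ℝ,
      0 ≤ A₁ ∧ 0 ≤ A₂ ∧ 0 ≤ B₁ ∧ 0 ≤ B₂ ∧ 0 ≤ C₁ ∧ 0 ≤ C₂ ∧ 0 ≤ D₁ ∧ 0 ≤ D₂ ∧
      A₁ + A₂ = p₁ + e + s₁ ∧ B₁ + B₂ = p₂ + q₁ ∧ C₁ + C₂ = q₂ + r₁ ∧ D₁ + D₂ = r₂ + s₂ ∧
      A₁ * B₁ = p₁ * p₂ ∧ B₂ * C₁ = q₁ * q₂ ∧ C₂ * D₁ = r₁ * r₂ ∧ A₂ * D₂ = s₁ * s₂ := by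
  set S := Icc p₁ (p₁ + e + s₁)
  set B₂ : ℝ → ℝ := fun t => p₂ + q₁ - p₁ * p₂ / t
  set C₂ : ℝ → ℝ := fun t => q₂ + r₁ - q₁ * q₂ / B₂ t
  set D₂ : ℝ → ℝ := fun t => r₂ + s₂ - r₁ * r₂ / C₂ t
  have hB₂ : ∀ t ∈ S, q₁ ≤ B₂ t := fun t ht => by
    linarith [mul_div_le_of_le p₂ hp₁ hp₂ ht.1]
  have hC₂ : ∀ t ∈ S, r₁ ≤ C₂ t := fun t ht => by
    linarith [mul_div_le_of_le q₂ hq₁ hq₂ (hB₂ t ht)]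
  have hD₂ : ∀ t ∈ S, s₂ ≤ D₂ t := fun t ht => by
    linarith [mul_div_le_of_le r₂ hr₁ hr₂ (hC₂ t ht)]
  have cB₂ : ContinuousOn B₂ S :=
    continuousOn_const.sub (continuousOn_mul_div_of_le p₂ hp₁ continuousOn_id fun t ht => ht.1)
  have cC₂ : ContinuousOn C₂ S :=
    continuousOn_const.sub (continuousOn_mul_div_of_le q₂ hq₁ cB₂ hB₂)
  have cD₂ : ContinuousOn D₂ S :=
    continuousOn_const.sub (continuousOn_mul_div_of_le r₂ hr₁ cC₂ hC₂)
  have hA₂ : ∀ t ∈ S, 0 ≤ s₂ * s₁ / D₂ t := fun t ht =>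
    div_nonneg (mul_nonneg hs₂ hs₁) (hs₂.trans (hD₂ t ht))
  obtain ⟨t, ht, hA⟩ := exists_add_eq_of_continuousOn (φ := fun t => s₂ * s₁ / D₂ t)
    (by linarith) (continuousOn_mul_div_of_le s₁ hs₂ cD₂ hD₂) hA₂
    (fun t ht => by linarith [mul_div_le_of_le s₁ hs₂ hs₁ (hD₂ t ht)])
  refine ⟨t, s₂ * s₁ / D₂ t, p₁ * p₂ / t, B₂ t, q₁ * q₂ / B₂ t, C₂ t, r₁ * r₂ / C₂ t, D₂ t,
    hp₁.trans ht.1, hA₂ t ht, div_nonneg (mul_nonneg hp₁ hp₂) (hp₁.trans ht.1),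
    hq₁.trans (hB₂ t ht), div_nonneg (mul_nonneg hq₁ hq₂) (hq₁.trans (hB₂ t ht)),
    hr₁.trans (hC₂ t ht), div_nonneg (mul_nonneg hr₁ hr₂) (hr₁.trans (hC₂ t ht)),
    hs₂.trans (hD₂ t ht), hA, by ring, by ring, by ring, ?_, ?_, ?_, ?_⟩
  · rw [mul_comm, mul_div_mul_cancel_of_le p₂ hp₁ ht.1]
  · rw [mul_comm, mul_div_mul_cancel_of_le q₂ hq₁ (hB₂ t ht)]
  · rw [mul_comm, mul_div_mul_cancel_of_le r₂ hr₁ (hC₂ t ht)]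
  · rw [mul_div_mul_cancel_of_le s₁ hs₂ (hD₂ t ht), mul_comm]

lemma exists_normSq_eq_and_mul_conj_eq {A B : ℝ} (a b : ℂ) (hA : 0 ≤ A) (hB : 0 ≤ B)
    (h : A * B = normSq a * normSq b) :
    ∃ x y : ℂ, normSq x = A ∧ normSq y = B ∧ x * conj y = a * conj b := by
  rcases hA.eq_or_lt with rfl | hA
  · have hab : a * conj b = 0 := by
      rw [← normSq_eq_zero, normSq_mul, normSq_conj, ← h, zero_mul]
    exact ⟨0, (√B : ℝ), by simp, by rw [normSq_ofReal, Real.mul_self_sqrt hB], by simp [hab]⟩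
  · have hsA : (√A : ℂ) ≠ 0 := by exact_mod_cast (Real.sqrt_pos.2 hA).ne'
    refine ⟨(√A : ℝ), conj a * b / (√A : ℝ), ?_, ?_, ?_⟩
    · rw [normSq_ofReal, Real.mul_self_sqrt hA.le]
    · rw [normSq_div, normSq_ofReal, Real.mul_self_sqrt hA.le, normSq_mul, normSq_conj, ← h,
        mul_div_cancel_left₀ _ hA.ne']
    · rw [map_div₀, map_mul, conj_conj, conj_ofReal, mul_div_cancel₀ _ hsA]

lemma supportedOn_smul_add_smul (c d : ℂ) (i j k l : Fin 3) :
    SupportedOn (c • E i j + d • E k l) {(i, j), (k, l)} := by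
  intro p q hpq
  contrapose! hpq
  simp only [mem_insert_iff, mem_singleton_iff, Prod.ext_iff] at hpq
  simp_all [E, eq_comm]

theorem kraus_sum_eq_of_choi_entries_eq
    {a₄ a₈ a₁₂ a₁₆ a₃₈ b₄ b₈ b₁₂ b₁₆ x₁ y₁ x₂ y₂ x₃ y₃ x₄ y₄ : ℂ}
    (h₀₀ : normSq x₁ + normSq x₃ = normSq a₄ + normSq a₃₈ + normSq a₁₂)
    (h₀₁ : normSq y₁ + normSq x₄ = normSq b₄ + normSq b₁₆)
    (h₁₀ : normSq y₄ + normSq x₂ = normSq a₁₆ + normSq a₈)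
    (h₁₁ : normSq y₂ + normSq y₃ = normSq b₈ + normSq b₁₂)
    (h₁ : x₁ * conj y₁ = a₄ * conj b₄) (h₂ : x₂ * conj y₂ = a₈ * conj b₈)
    (h₃ : x₃ * conj y₃ = a₁₂ * conj b₁₂) (h₄ : x₄ * conj y₄ = b₁₆ * conj a₁₆)
    (ρ : Matrix (Fin 3) (Fin 3) ℂ) :
    (a₄ • E 0 0 + b₄ • E 0 1) * ρ * (a₄ • E 0 0 + b₄ • E 0 1)ᴴ +
      (a₈ • E 1 0 + b₈ • E 1 1) * ρ * (a₈ • E 1 0 + b₈ • E 1 1)ᴴ +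
      (a₃₈ • E 0 0) * ρ * (a₃₈ • E 0 0)ᴴ +
      (b₁₆ • E 0 1 + a₁₆ • E 1 0) * ρ * (b₁₆ • E 0 1 + a₁₆ • E 1 0)ᴴ +
      (a₁₂ • E 0 0 + b₁₂ • E 1 1) * ρ * (a₁₂ • E 0 0 + b₁₂ • E 1 1)ᴴ =
    (x₁ • E 0 0 + y₁ • E 0 1) * ρ * (x₁ • E 0 0 + y₁ • E 0 1)ᴴ +
      (x₂ • E 1 0 + y₂ • E 1 1) * ρ * (x₂ • E 1 0 + y₂ • E 1 1)ᴴ +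
      (x₃ • E 0 0 + y₃ • E 1 1) * ρ * (x₃ • E 0 0 + y₃ • E 1 1)ᴴ +
      (x₄ • E 0 1 + y₄ • E 1 0) * ρ * (x₄ • E 0 1 + y₄ • E 1 0)ᴴ := by
  have hc : ∀ z : ℂ, (normSq z : ℂ) = z * conj z := fun z => (mul_conj z).symm
  replace h₀₀ := congrArg ((↑) : ℝ → ℂ) h₀₀
  replace h₀₁ := congrArg ((↑) : ℝ → ℂ) h₀₁
  replace h₁₀ := congrArg ((↑) : ℝ → ℂ) h₁₀
  replace h₁₁ := congrArg ((↑) : ℝ → ℂ) h₁₁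
  push_cast [hc] at h₀₀ h₀₁ h₁₀ h₁₁
  have h₁' := congrArg conj h₁
  have h₂' := congrArg conj h₂
  have h₃' := congrArg conj h₃
  have h₄' := congrArg conj h₄
  simp only [map_mul, conj_conj] at h₁' h₂' h₃' h₄'
  ext i j
  fin_cases i <;> fin_cases j <;> simp [mul_apply, E, single_apply, Fin.sum_univ_three]
  · linear_combination -(ρ 0 0 * h₀₀ + ρ 0 1 * h₁ + ρ 1 0 * h₁' + ρ 1 1 * h₀₁)
  · linear_combination -(ρ 0 1 * h₃ + ρ 1 0 * h₄)
  · linear_combination -(ρ 0 1 * h₄' + ρ 1 0 * h₃')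
  · linear_combination -(ρ 0 0 * h₁₀ + ρ 0 1 * h₂ + ρ 1 0 * h₂' + ρ 1 1 * h₁₁)

theorem reduce_4_8_38_16_12 (a₄ a₈ a₁₂ a₁₆ a₃₈ b₄ b₈ b₁₂ b₁₆ : ℂ) :
    ∃ L₁ L₂ L₃ L₄ : Matrix (Fin 3) (Fin 3) ℂ,
      SupportedOn L₁ {(0, 0), (0, 1)} ∧
      SupportedOn L₂ {(1, 0), (1, 1)} ∧
      SupportedOn L₃ {(0, 0), (1, 1)} ∧
      SupportedOn L₄ {(0, 1), (1, 0)} ∧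
      ∀ ρ : Matrix (Fin 3) (Fin 3) ℂ,
        (a₄ • E 0 0 + b₄ • E 0 1) * ρ * (a₄ • E 0 0 + b₄ • E 0 1)ᴴ +
        (a₈ • E 1 0 + b₈ • E 1 1) * ρ * (a₈ • E 1 0 + b₈ • E 1 1)ᴴ +
        (a₃₈ • E 0 0) * ρ * (a₃₈ • E 0 0)ᴴ +
        (b₁₆ • E 0 1 + a₁₆ • E 1 0) * ρ * (b₁₆ • E 0 1 + a₁₆ • E 1 0)ᴴ +
        (a₁₂ • E 0 0 + b₁₂ • E 1 1) * ρ * (a₁₂ • E 0 0 + b₁₂ • E 1 1)ᴴ =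
        L₁ * ρ * L₁ᴴ + L₂ * ρ * L₂ᴴ + L₃ * ρ * L₃ᴴ + L₄ * ρ * L₄ᴴ := by
  obtain ⟨A₁, A₂, B₁, B₂, C₁, C₂, D₁, D₂, hA₁, hA₂, hB₁, hB₂, hC₁, hC₂, hD₁, hD₂,
      h₀₀, h₀₁, h₁₀, h₁₁, hAB, hBC, hCD, hAD⟩ :=
    exists_four_cycle_split (normSq_nonneg a₄) (normSq_nonneg b₄) (normSq_nonneg b₁₆)
      (normSq_nonneg a₁₆) (normSq_nonneg a₈) (normSq_nonneg b₈) (normSq_nonneg a₁₂)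
      (normSq_nonneg b₁₂) (normSq_nonneg a₃₈)
  obtain ⟨x₁, y₁, rfl, rfl, h₁⟩ := exists_normSq_eq_and_mul_conj_eq a₄ b₄ hA₁ hB₁ hAB
  obtain ⟨x₂, y₂, rfl, rfl, h₂⟩ := exists_normSq_eq_and_mul_conj_eq a₈ b₈ hC₂ hD₁ hCD
  obtain ⟨x₃, y₃, rfl, rfl, h₃⟩ := exists_normSq_eq_and_mul_conj_eq a₁₂ b₁₂ hA₂ hD₂ hAD
  obtain ⟨x₄, y₄, rfl, rfl, h₄⟩ := exists_normSq_eq_and_mul_conj_eq b₁₆ a₁₆ hB₂ hC₁ hBC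
  exact ⟨_, _, _, _, supportedOn_smul_add_smul x₁ y₁ 0 0 0 1,
    supportedOn_smul_add_smul x₂ y₂ 1 0 1 1, supportedOn_smul_add_smul x₃ y₃ 0 0 1 1,
    supportedOn_smul_add_smul x₄ y₄ 0 1 1 0,
    kraus_sum_eq_of_choi_entries_eq h₀₀ h₀₁ h₁₀ h₁₁ h₁ h₂ h₃ h₄⟩
end
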